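/- arXiv:1704.02251 — 2 statements merged into one kernel-verified Lean document; each statement's English description precedes it below -/
import Mathlib

section
/- Let α be strictly increasing with α_n > 1 and α_n → ∞, and suppose S_1(α) := {s ∈ ℝ : Σ_{n=1}^∞ e^{α_n}/n^s < ∞} is non-empty. Then {λ ∈ ℂ : |λ − 1/2| < 1/2} ∪ {1/m : m ≥ 1} ⊆ σ(C; Λ₀(α)) ⊆ {λ ∈ ℂ : |λ − 1/2| ≤ 1/2}. In particular, the closure of σ(C; Λ₀(α)) equals the closed disc {λ ∈ ℂ : |λ − 1/2| ≤ 1/2}. -/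
open Filter Finset Topology

noncomputable section

/-- The weight `w_k(n) = e^{-alpha_n / k}`.  Indices are shifted by one: the natural
numbers `k n : Nat` represent the indices `k+1` and `n+1` (both running from `1`). -/
def wt (a : ℕ → ℝ) (k n : ℕ) : ℝ := Real.exp (-(a n) / ((k : ℝ) + 1))

/-- Membership in the power series space of finite type `Λ₀(α)`:
`x ∈ Λ₀(α)` iff `w_k(n)|x_n| → 0` for every `k ≥ 1`. -/
def memLambda (a : ℕ → ℝ) (x : ℕ → ℂ) : Prop :=
  ∀ k : ℕ, Tendsto (fun n => wt a k n * ‖x n‖) atTop (𝓝 0)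

/-- The norm `p_k(x) = sup_n w_k(n)|x_n|` generating the Fréchet topology of `Λ₀(α)`. -/
def pk (a : ℕ → ℝ) (k : ℕ) (x : ℕ → ℂ) : ℝ := ⨆ n : ℕ, wt a k n * ‖x n‖

/-- The discrete Cesàro operator `(C x)_n = (x_1 + ⋯ + x_n)/n` (0-indexed). -/
def cesaro (x : ℕ → ℂ) : ℕ → ℂ := fun n => (∑ i ∈ Finset.range (n + 1), x i) / ((n : ℂ) + 1)

/-- `S_k(α) = {s ∈ ℝ : ∑ₙ e^{α_n/k} / n^s < ∞}` (again `k : Nat` represents `k+1`). -/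
def Sk (a : ℕ → ℝ) (k : ℕ) : Set ℝ :=
  {s : ℝ | Summable fun n : ℕ => Real.exp (a n / ((k : ℝ) + 1)) / ((n : ℝ) + 1) ^ s}

/-- `lam` belongs to the resolvent set of the Cesàro operator on `Λ₀(α)`:
`lam • I - C` has a linear inverse `T` on `Λ₀(α)` which is continuous for the
Fréchet topology generated by the norms `p_k`. -/
def InResolvent (a : ℕ → ℝ) (lam : ℂ) : Prop :=
  ∃ T : (ℕ → ℂ) → (ℕ → ℂ),
    (∀ x, memLambda a x → memLambda a (T x)) ∧
    (∀ x y, memLambda a x → memLambda a y → T (x + y) = T x + T y) ∧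
    (∀ (c : ℂ) (x), memLambda a x → T (c • x) = c • T x) ∧
    (∀ k : ℕ, ∃ l : ℕ, ∃ M : ℝ, 0 < M ∧ ∀ x, memLambda a x → pk a k (T x) ≤ M * pk a l x) ∧
    (∀ x, memLambda a x → T (lam • x - cesaro x) = x) ∧
    (∀ x, memLambda a x → lam • T x - cesaro (T x) = x)

/-!
For `λ` different from every `1/(m+1)` the equation `λ u - C u = y` is a triangular recursion
`(λ - 1/(n+1)) S_{n+1} = λ S_n + y_n` for the partial sums `S_n = ∑_{i<n} u_i`, so it has exactly
one solution. The growth of that solution is governed by the ratio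
`|λ| / |λ - 1/(n+1)| = 1 / |1 - λ⁻¹/(n+1)| ≈ 1 + Re(λ⁻¹)/(n+1)`, and `Re(λ⁻¹) > 1` exactly on
the open disc `|λ - 1/2| < 1/2`.

Outside the closed disc `Re(λ⁻¹) < 1`, so `|S_n| = O((n+1) e^{α_n/k} p_k(y))` and hence
`p_k(T y) ≤ M p_k(y)`: the inverse exists and is continuous. Inside the disc the solution of
`λ u - C u = e_0` grows like `n^{Re(λ⁻¹) - 1}`, while `s ∈ S_1(α)` forces `α_n ≤ s log n`, so
`w_k(n) ≥ n^{-s/k}` and `w_k(n) |u_n|` does not tend to `0` once `k` is large. For `λ = 1/(m+1)`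
the equation `λ u - C u = e_m` has no solution at all.
-/

/-- The `n`-th diagonal entry of the lower triangular matrix of `lam • I - C`. -/
def diagEntry (lam : ℂ) (n : ℕ) : ℂ := lam - 1 / ((n : ℂ) + 1)

lemma sub_cesaro_apply (lam : ℂ) (x : ℕ → ℂ) (n : ℕ) :
    (lam • x - cesaro x) n =
      diagEntry lam n * ∑ i ∈ range (n + 1), x i - lam * ∑ i ∈ range n, x i := by
  simp only [Pi.sub_apply, Pi.smul_apply, smul_eq_mul, cesaro, diagEntry, sum_range_succ]
  ring

lemma sum_range_eq_of_sub_cesaro_eq {lam : ℂ} (hd : ∀ n, diagEntry lam n ≠ 0) {u v : ℕ → ℂ}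
    (h : lam • u - cesaro u = lam • v - cesaro v) (n : ℕ) :
    ∑ i ∈ range n, u i = ∑ i ∈ range n, v i := by
  induction n with
  | zero => simp
  | succ n ih =>
    have hn := congrFun h n
    rw [sub_cesaro_apply, sub_cesaro_apply, ih] at hn
    exact mul_left_cancel₀ (hd n) (by linear_combination hn)

lemma eq_of_sub_cesaro_eq {lam : ℂ} (hd : ∀ n, diagEntry lam n ≠ 0) {u v : ℕ → ℂ}
    (h : lam • u - cesaro u = lam • v - cesaro v) : u = v := by
  funext n
  rw [← sum_range_succ_sub_sum u, ← sum_range_succ_sub_sum v,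
    sum_range_eq_of_sub_cesaro_eq hd h, sum_range_eq_of_sub_cesaro_eq hd h]

lemma memLambda_single (a : ℕ → ℝ) (m : ℕ) : memLambda a (Pi.single m 1) := by
  intro k
  refine tendsto_const_nhds.congr' ?_
  filter_upwards [eventually_gt_atTop m] with n hn
  simp [hn.ne']

lemma not_inResolvent_of_forall_ne {a : ℕ → ℝ} {lam : ℂ} {y : ℕ → ℂ} (hy : memLambda a y)
    (h : ∀ u, memLambda a u → lam • u - cesaro u ≠ y) : ¬ InResolvent a lam := by
  rintro ⟨T, hT, -, -, -, -, hTinv⟩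
  exact h (T y) (hT y hy) (hTinv y hy)

lemma not_inResolvent_inv_succ (a : ℕ → ℝ) (m : ℕ) : ¬ InResolvent a (1 / ((m : ℂ) + 1)) := by
  refine not_inResolvent_of_forall_ne (memLambda_single a m) fun u _ h => ?_
  have hd : ∀ n, diagEntry (1 / ((m : ℂ) + 1)) n = 0 ↔ n = m := by
    intro n
    rw [diagEntry, sub_eq_zero, one_div, one_div, inv_inj, add_left_inj, Nat.cast_inj]
    exact eq_comm
  have hzero : ∀ n ≤ m, ∑ i ∈ range n, u i = 0 := by
    intro n hn
    induction n with
    | zero => simp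
    | succ n ih =>
      have hn' := congrFun h n
      rw [sub_cesaro_apply, ih (by omega), Pi.single_apply, if_neg (by omega), mul_zero,
        sub_zero] at hn'
      exact (mul_eq_zero.mp hn').resolve_left fun h0 => by have := (hd n).mp h0; omega
  have hm := congrFun h m
  rw [sub_cesaro_apply, (hd m).mpr rfl, hzero m le_rfl, Pi.single_eq_same] at hm
  simp at hm

lemma norm_sub_half_sq (lam : ℂ) : ‖lam - 1 / 2‖ ^ 2 = ‖lam‖ ^ 2 - lam.re + 1 / 4 := by
  simp only [Complex.sq_norm, Complex.normSq_apply, Complex.sub_re, Complex.sub_im]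
  norm_num
  ring

lemma one_lt_re_inv_of_norm_sub_half_lt {lam : ℂ} (h : ‖lam - 1 / 2‖ < 1 / 2) :
    1 < (lam⁻¹).re := by
  have hsq : ‖lam‖ ^ 2 < lam.re := by
    nlinarith [norm_sub_half_sq lam, norm_nonneg (lam - 1 / 2)]
  have hpos : 0 < ‖lam‖ ^ 2 := by
    have : lam ≠ 0 := by rintro rfl; simp at hsq
    positivity
  rw [Complex.inv_re, ← Complex.sq_norm, one_lt_div hpos]
  exact hsq

lemma re_inv_lt_one_of_half_lt_norm_sub_half {lam : ℂ} (h : 1 / 2 < ‖lam - 1 / 2‖) :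
    (lam⁻¹).re < 1 := by
  have hsq : lam.re < ‖lam‖ ^ 2 := by nlinarith [norm_sub_half_sq lam]
  have hpos : 0 < ‖lam‖ ^ 2 := by
    have : lam ≠ 0 := by rintro rfl; simp at hsq
    positivity
  rw [Complex.inv_re, ← Complex.sq_norm, div_lt_one hpos]
  exact hsq

lemma norm_sub_half_sub_half_le_norm_diagEntry (lam : ℂ) (n : ℕ) :
    ‖lam - 1 / 2‖ - 1 / 2 ≤ ‖diagEntry lam n‖ := by
  have hx : ‖1 / ((n : ℂ) + 1) - 1 / 2‖ ≤ 1 / 2 := by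
    have hcast : 1 / ((n : ℂ) + 1) - 1 / 2 = ((1 / ((n : ℝ) + 1) - 1 / 2 : ℝ) : ℂ) := by
      push_cast; ring
    have h0 : 0 < 1 / ((n : ℝ) + 1) := by positivity
    have h1 : 1 / ((n : ℝ) + 1) ≤ 1 := by
      rw [div_le_one (by positivity)]; linarith [n.cast_nonneg (α := ℝ)]
    rw [hcast, Complex.norm_real, Real.norm_eq_abs, abs_le]
    constructor <;> linarith
  have := norm_add_le (diagEntry lam n) (1 / ((n : ℂ) + 1) - 1 / 2)
  rw [diagEntry, sub_add_sub_cancel] at this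
  exact sub_le_iff_le_add.mpr (this.trans (add_le_add_right hx _))

lemma norm_diagEntry_le (lam : ℂ) (n : ℕ) : ‖diagEntry lam n‖ ≤ ‖lam‖ + 1 := by
  have h : ‖1 / ((n : ℂ) + 1)‖ ≤ 1 := by
    have hn : ‖(n : ℂ) + 1‖ = n + 1 := by exact_mod_cast Complex.norm_natCast (n + 1)
    rw [norm_div, norm_one, hn, div_le_one (by positivity)]
    linarith [n.cast_nonneg (α := ℝ)]
  exact (norm_sub_le _ _).trans (by linarith)

lemma norm_diagEntry_eq {lam : ℂ} (hlam : lam ≠ 0) (n : ℕ) :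
    ‖diagEntry lam n‖ = ‖lam‖ * ‖1 - ((1 / ((n : ℝ) + 1) : ℝ) : ℂ) * lam⁻¹‖ := by
  rw [← norm_mul, diagEntry, mul_sub, mul_one, mul_left_comm, mul_inv_cancel₀ hlam, mul_one]
  push_cast
  ring_nf

lemma one_le_mul_norm_one_sub {μ : ℂ} {γ x : ℝ} (hγ0 : 0 ≤ γ) (hγ1 : γ ≤ 1) (hx : 0 ≤ x)
    (hxγ : 3 * x ≤ 2 * (γ - μ.re)) : 1 ≤ (1 + γ * x) * ‖1 - x * μ‖ := by
  have hnorm : 1 - 2 * x * μ.re ≤ ‖1 - x * μ‖ ^ 2 := by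
    rw [Complex.sq_norm, Complex.normSq_apply]
    simp only [Complex.sub_re, Complex.one_re, Complex.re_ofReal_mul, Complex.sub_im,
      Complex.one_im, Complex.im_ofReal_mul]
    nlinarith [sq_nonneg (x * μ.re), sq_nonneg (x * μ.im)]
  have hquad : 1 - 2 * γ * x + 3 * (γ * x) ^ 2 ≤ 1 - 2 * x * μ.re := by
    nlinarith [mul_le_mul_of_nonneg_left hxγ hx, mul_le_mul_of_nonneg_right
      (show γ ^ 2 ≤ 1 by nlinarith) (sq_nonneg x)]
  -- `(1 + t) ^ 2 * (1 - 2 * t + 3 * t ^ 2) = 1 + 4 * t ^ 3 + 3 * t ^ 4`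
  have hpoly : 1 ≤ (1 + γ * x) ^ 2 * (1 - 2 * γ * x + 3 * (γ * x) ^ 2) := by
    have ht : 0 ≤ γ * x := mul_nonneg hγ0 hx
    nlinarith [pow_nonneg ht 3, pow_nonneg ht 4]
  rw [← one_le_sq_iff₀ (by positivity), mul_pow]
  calc 1 ≤ _ := hpoly
    _ ≤ _ := mul_le_mul_of_nonneg_left (hquad.trans hnorm) (sq_nonneg _)

lemma norm_one_sub_le_exp (z : ℂ) : ‖1 - z‖ ≤ Real.exp (-z.re + ‖z‖ ^ 2 / 2) := by
  rw [← abs_norm, ← abs_of_pos (Real.exp_pos _), ← sq_le_sq, ← Real.exp_nat_mul]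
  have h := Real.add_one_le_exp (-2 * z.re + ‖z‖ ^ 2)
  calc ‖1 - z‖ ^ 2 = -2 * z.re + ‖z‖ ^ 2 + 1 := by
        simp only [Complex.sq_norm, Complex.normSq_apply, Complex.sub_re, Complex.one_re,
          Complex.sub_im, Complex.one_im]
        ring
    _ ≤ _ := h.trans_eq (by congr 1; push_cast; ring)

lemma exists_le_mul_succ_of_le_one_add_mul {r : ℕ → ℝ} {γ : ℝ} (hγ0 : 0 ≤ γ) (hγ1 : γ < 1)
    (h : ∀ᶠ n : ℕ in atTop, r (n + 1) ≤ (1 + γ / ((n : ℝ) + 1)) * r n + 1) :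
    ∃ B, 0 < B ∧ ∀ n : ℕ, r n ≤ B * ((n : ℝ) + 1) := by
  obtain ⟨N, hN⟩ := eventually_atTop.mp h
  obtain ⟨B₀, hB₀⟩ : ∃ B₀, ∀ n ≤ N, r n ≤ B₀ :=
    ⟨∑ i ∈ range (N + 1), |r i|, fun n hn => (le_abs_self _).trans
      (single_le_sum (f := fun i => |r i|) (fun i _ => abs_nonneg _) (mem_range.mpr (by omega)))⟩
  set B := max (max B₀ 1) (1 / (1 - γ))
  have hB₀B : B₀ ≤ B := (le_max_left _ _).trans (le_max_left _ _)
  have hB1 : 1 ≤ B := (le_max_right _ _).trans (le_max_left _ _)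
  have hγB : γ * B + 1 ≤ B := by
    have : 1 ≤ (1 - γ) * B := (div_le_iff₀' (by linarith)).mp (le_max_right _ _)
    linarith
  refine ⟨B, by linarith, fun n => ?_⟩
  induction n with
  | zero => simpa using (hB₀ 0 (Nat.zero_le _)).trans hB₀B
  | succ n ih =>
    rcases le_or_gt (n + 1) N with hn | hn
    · have h1 : (1 : ℝ) ≤ ((n + 1 : ℕ) : ℝ) + 1 := by linarith [(n + 1).cast_nonneg (α := ℝ)]
      exact (hB₀ _ hn).trans (hB₀B.trans (le_mul_of_one_le_right (by linarith) h1))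
    · have hstep := mul_le_mul_of_nonneg_left ih (by positivity : 0 ≤ 1 + γ / ((n : ℝ) + 1))
      calc r (n + 1) ≤ (1 + γ / ((n : ℝ) + 1)) * r n + 1 := hN n (by omega)
        _ ≤ (1 + γ / ((n : ℝ) + 1)) * (B * ((n : ℝ) + 1)) + 1 := by linarith
        _ = B * ((n : ℝ) + 1) + γ * B + 1 := by field_simp
        _ ≤ B * (((n + 1 : ℕ) : ℝ) + 1) := by push_cast; linarith

lemma log_add_two_sub_log_add_one_le (n : ℕ) :
    Real.log ((n : ℝ) + 2) - Real.log ((n : ℝ) + 1) ≤ 1 / ((n : ℝ) + 1) := by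
  rw [← Real.log_div (by positivity) (by positivity)]
  refine (Real.log_le_sub_one_of_pos (by positivity)).trans_eq ?_
  field_simp
  ring

lemma exists_pos_mul_exp_mul_log_le {r : ℕ → ℝ} {γ : ℝ} (hγ : 0 ≤ γ)
    (hpos : ∀ᶠ n : ℕ in atTop, 0 < r n)
    (h : ∀ᶠ n : ℕ in atTop, Real.exp (γ / ((n : ℝ) + 1)) * r n ≤ r (n + 1)) :
    ∃ c > 0, ∀ᶠ n : ℕ in atTop, c * Real.exp (γ * Real.log ((n : ℝ) + 1)) ≤ r n := by
  obtain ⟨N, hN⟩ := eventually_atTop.mp (hpos.and h)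
  set g : ℕ → ℝ := fun n => r n * Real.exp (-(γ * Real.log ((n : ℝ) + 1)))
  have hg : ∀ n ≥ N, g n ≤ g (n + 1) := by
    intro n hn
    have hexp : Real.exp (-(γ * Real.log ((n : ℝ) + 1))) ≤
        Real.exp (γ / ((n : ℝ) + 1)) * Real.exp (-(γ * Real.log (((n + 1 : ℕ) : ℝ) + 1))) := by
      rw [← Real.exp_add, Real.exp_le_exp]
      have := mul_le_mul_of_nonneg_left (log_add_two_sub_log_add_one_le n) hγ
      rw [mul_one_div] at this
      push_cast
      rw [show (n : ℝ) + 1 + 1 = n + 2 by ring]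
      linarith
    calc g n ≤ r n * (Real.exp (γ / ((n : ℝ) + 1)) *
          Real.exp (-(γ * Real.log (((n + 1 : ℕ) : ℝ) + 1)))) :=
          mul_le_mul_of_nonneg_left hexp (hN n hn).1.le
      _ = Real.exp (γ / ((n : ℝ) + 1)) * r n *
          Real.exp (-(γ * Real.log (((n + 1 : ℕ) : ℝ) + 1))) := by ring
      _ ≤ g (n + 1) := mul_le_mul_of_nonneg_right (hN n hn).2 (Real.exp_pos _).le
  refine ⟨g N, mul_pos (hN N le_rfl).1 (Real.exp_pos _), eventually_atTop.mpr ⟨N, fun n hn => ?_⟩⟩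
  have hmono : g N ≤ g n := by
    induction n, hn using Nat.le_induction with
    | base => rfl
    | succ n hn ih => exact ih.trans (hg n hn)
  calc g N * Real.exp (γ * Real.log ((n : ℝ) + 1))
      ≤ g n * Real.exp (γ * Real.log ((n : ℝ) + 1)) :=
        mul_le_mul_of_nonneg_right hmono (Real.exp_pos _).le
    _ = r n := by simp only [g, mul_assoc, ← Real.exp_add, neg_add_cancel, Real.exp_zero, mul_one]

/-- The partial sums `∑_{i<n} (T y)_i` of the solution `T y` of `lam • T y - C (T y) = y`. -/
def partialSol (lam : ℂ) (y : ℕ → ℂ) : ℕ → ℂ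
  | 0 => 0
  | n + 1 => (lam * partialSol lam y n + y n) / diagEntry lam n

def cesaroResolvent (lam : ℂ) (y : ℕ → ℂ) (n : ℕ) : ℂ :=
  partialSol lam y (n + 1) - partialSol lam y n

lemma sum_range_cesaroResolvent (lam : ℂ) (y : ℕ → ℂ) (n : ℕ) :
    ∑ i ∈ range n, cesaroResolvent lam y i = partialSol lam y n :=
  (sum_range_sub (partialSol lam y) n).trans (sub_zero _)

lemma sub_cesaro_cesaroResolvent {lam : ℂ} (hd : ∀ n, diagEntry lam n ≠ 0) (y : ℕ → ℂ) :
    lam • cesaroResolvent lam y - cesaro (cesaroResolvent lam y) = y := by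
  funext n
  rw [sub_cesaro_apply, sum_range_cesaroResolvent, sum_range_cesaroResolvent, partialSol,
    mul_div_cancel₀ _ (hd n), add_sub_cancel_left]

lemma cesaroResolvent_sub_cesaro {lam : ℂ} (hd : ∀ n, diagEntry lam n ≠ 0) (x : ℕ → ℂ) :
    cesaroResolvent lam (lam • x - cesaro x) = x :=
  eq_of_sub_cesaro_eq hd (sub_cesaro_cesaroResolvent hd _)

lemma partialSol_add (lam : ℂ) (x y : ℕ → ℂ) (n : ℕ) :
    partialSol lam (x + y) n = partialSol lam x n + partialSol lam y n := by
  induction n with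
  | zero => simp [partialSol]
  | succ n ih => simp only [partialSol, ih, Pi.add_apply]; ring

lemma partialSol_smul (lam c : ℂ) (x : ℕ → ℂ) (n : ℕ) :
    partialSol lam (c • x) n = c * partialSol lam x n := by
  induction n with
  | zero => simp [partialSol]
  | succ n ih => simp only [partialSol, ih, Pi.smul_apply, smul_eq_mul]; ring

lemma cesaroResolvent_add (lam : ℂ) (x y : ℕ → ℂ) :
    cesaroResolvent lam (x + y) = cesaroResolvent lam x + cesaroResolvent lam y := by
  funext n
  simp only [cesaroResolvent, partialSol_add, Pi.add_apply]
  ring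

lemma cesaroResolvent_smul (lam c : ℂ) (x : ℕ → ℂ) :
    cesaroResolvent lam (c • x) = c • cesaroResolvent lam x := by
  funext n
  simp only [cesaroResolvent, partialSol_smul, Pi.smul_apply, smul_eq_mul]
  ring

lemma wt_mul_exp (a : ℕ → ℝ) (k n : ℕ) : wt a k n * Real.exp (a n / ((k : ℝ) + 1)) = 1 := by
  rw [wt, ← Real.exp_add, neg_div, neg_add_cancel, Real.exp_zero]

lemma le_pk {a : ℕ → ℝ} {x : ℕ → ℂ} (hx : memLambda a x) (k n : ℕ) :
    wt a k n * ‖x n‖ ≤ pk a k x :=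
  le_ciSup (hx k).bddAbove_range n

lemma pk_nonneg {a : ℕ → ℝ} {x : ℕ → ℂ} (hx : memLambda a x) (k : ℕ) : 0 ≤ pk a k x :=
  (mul_nonneg (Real.exp_pos _).le (norm_nonneg _)).trans (le_pk hx k 0)

lemma norm_le_pk_mul_exp {a : ℕ → ℝ} {x : ℕ → ℂ} (hx : memLambda a x) (k n : ℕ) :
    ‖x n‖ ≤ pk a k x * Real.exp (a n / ((k : ℝ) + 1)) := by
  calc ‖x n‖ = wt a k n * ‖x n‖ * Real.exp (a n / ((k : ℝ) + 1)) := by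
        rw [mul_right_comm, wt_mul_exp, one_mul]
    _ ≤ _ := mul_le_mul_of_nonneg_right (le_pk hx k n) (Real.exp_pos _).le

lemma memLambda_of_bounded {a : ℕ → ℝ} (htop : Tendsto a atTop atTop) {x : ℕ → ℂ}
    (h : ∀ k, ∃ C, ∀ n, wt a k n * ‖x n‖ ≤ C) : memLambda a x := by
  intro k
  obtain ⟨C, hC⟩ := h (k + 1)
  set c : ℝ := 1 / ((k : ℝ) + 1) - 1 / ((k + 1 : ℕ) + 1)
  have hc : 0 < c := sub_pos.mpr (one_div_lt_one_div_of_lt (by positivity) (by push_cast; linarith))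
  have hsplit : ∀ n, wt a k n = wt a (k + 1) n * Real.exp (-(c * a n)) := by
    intro n
    rw [wt, wt, ← Real.exp_add]
    congr 1
    ring
  have hlim : Tendsto (fun n => C * Real.exp (-(c * a n))) atTop (𝓝 0) := by
    simpa using ((Real.tendsto_exp_atBot.comp
      (tendsto_neg_atTop_atBot.comp (htop.const_mul_atTop hc))).const_mul C)
  refine squeeze_zero (fun n => mul_nonneg (Real.exp_pos _).le (norm_nonneg _)) (fun n => ?_) hlim
  rw [hsplit, mul_right_comm]
  exact mul_le_mul_of_nonneg_right (hC n) (Real.exp_pos _).le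

def growthMajorant (lam : ℂ) : ℕ → ℝ
  | 0 => 0
  | n + 1 => ‖lam‖ / ‖diagEntry lam n‖ * growthMajorant lam n + 1

lemma growthMajorant_nonneg (lam : ℂ) (n : ℕ) : 0 ≤ growthMajorant lam n := by
  induction n with
  | zero => exact le_rfl
  | succ n ih => rw [growthMajorant]; positivity

section Estimates

variable {lam : ℂ} {δ : ℝ} (hδ : 0 < δ) (hdδ : ∀ n, δ ≤ ‖diagEntry lam n‖)
  {y : ℕ → ℂ} {E : ℕ → ℝ} (hy : ∀ n, ‖y n‖ ≤ E n)
include hδ hdδ hy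

lemma norm_partialSol_le (hE : Monotone E) (n : ℕ) :
    ‖partialSol lam y n‖ ≤ E n * growthMajorant lam n / δ := by
  induction n with
  | zero => simp [partialSol, growthMajorant]
  | succ n ih =>
    have hd : 0 < ‖diagEntry lam n‖ := hδ.trans_le (hdδ n)
    have hE0 : 0 ≤ E n := (norm_nonneg _).trans (hy n)
    calc ‖partialSol lam y (n + 1)‖
        ≤ ‖lam‖ / ‖diagEntry lam n‖ * ‖partialSol lam y n‖ + ‖y n‖ / ‖diagEntry lam n‖ := by
          rw [partialSol, norm_div, div_mul_eq_mul_div, ← add_div, ← norm_mul]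
          exact div_le_div_of_nonneg_right (norm_add_le _ _) hd.le
      _ ≤ ‖lam‖ / ‖diagEntry lam n‖ * (E n * growthMajorant lam n / δ) + E n / δ := by
          gcongr
          · exact hy n
          · exact hdδ n
      _ = E n * growthMajorant lam (n + 1) / δ := by rw [growthMajorant]; ring
      _ ≤ E (n + 1) * growthMajorant lam (n + 1) / δ := by
          gcongr
          · exact growthMajorant_nonneg lam _
          · exact hE n.le_succ

lemma norm_cesaroResolvent_le (hE : Monotone E) {B : ℝ}
    (hB : ∀ n, growthMajorant lam n ≤ B * ((n : ℝ) + 1)) (n : ℕ) :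
    ‖cesaroResolvent lam y n‖ ≤ (1 + B / δ) / δ * E n := by
  have hd : diagEntry lam n ≠ 0 := norm_pos_iff.mp (hδ.trans_le (hdδ n))
  have hn : (0 : ℝ) < (n : ℝ) + 1 := by positivity
  have hE0 : 0 ≤ E n := (norm_nonneg _).trans (hy n)
  have hrel : diagEntry lam n * cesaroResolvent lam y n =
      y n + partialSol lam y n / ((n : ℂ) + 1) := by
    rw [cesaroResolvent, partialSol, mul_sub, mul_div_cancel₀ _ hd, diagEntry]
    ring
  have hnorm : ‖partialSol lam y n / ((n : ℂ) + 1)‖ ≤ E n * B / δ := by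
    rw [norm_div, show ‖(n : ℂ) + 1‖ = (n : ℝ) + 1 by exact_mod_cast Complex.norm_natCast (n + 1),
      div_le_iff₀ hn]
    calc ‖partialSol lam y n‖ ≤ E n * growthMajorant lam n / δ :=
          norm_partialSol_le hδ hdδ hy hE n
      _ ≤ E n * (B * ((n : ℝ) + 1)) / δ := by gcongr; exact hB n
      _ = E n * B / δ * ((n : ℝ) + 1) := by ring
  calc ‖cesaroResolvent lam y n‖
      ≤ ‖diagEntry lam n * cesaroResolvent lam y n‖ / δ := by
        rw [norm_mul, le_div_iff₀ hδ, mul_comm]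
        exact mul_le_mul_of_nonneg_right (hdδ n) (norm_nonneg _)
    _ ≤ (E n + E n * B / δ) / δ := by
        rw [hrel]
        gcongr
        exact (norm_add_le _ _).trans (add_le_add (hy n) hnorm)
    _ = (1 + B / δ) / δ * E n := by ring

end Estimates

lemma eventually_norm_le_mul_norm_diagEntry {lam : ℂ} (hlam : lam ≠ 0) {γ : ℝ} (hγ0 : 0 ≤ γ)
    (hγ1 : γ ≤ 1) (hγ : (lam⁻¹).re < γ) :
    ∀ᶠ n : ℕ in atTop, ‖lam‖ ≤ (1 + γ / ((n : ℝ) + 1)) * ‖diagEntry lam n‖ := by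
  have hsmall : ∀ᶠ n : ℕ in atTop, 3 * (1 / ((n : ℝ) + 1)) ≤ 2 * (γ - (lam⁻¹).re) :=
    (tendsto_one_div_add_atTop_nhds_zero_nat.const_mul 3).eventually
      (ge_mem_nhds (by linarith))
  filter_upwards [hsmall] with n hn
  have h := one_le_mul_norm_one_sub hγ0 hγ1 (by positivity) hn
  rw [norm_diagEntry_eq hlam, ← mul_one_div γ]
  nlinarith [norm_nonneg lam]

lemma exists_growthMajorant_le {lam : ℂ} (h : 1 / 2 < ‖lam - 1 / 2‖) :
    ∃ B, 0 < B ∧ ∀ n : ℕ, growthMajorant lam n ≤ B * ((n : ℝ) + 1) := by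
  have hlam : lam ≠ 0 := by rintro rfl; norm_num at h
  have hre := re_inv_lt_one_of_half_lt_norm_sub_half h
  set γ := max (((lam⁻¹).re + 1) / 2) 0
  have hγ1 : γ < 1 := max_lt (by linarith) one_pos
  refine exists_le_mul_succ_of_le_one_add_mul (le_max_right _ _) hγ1 ?_
  filter_upwards [eventually_norm_le_mul_norm_diagEntry hlam (le_max_right _ _) hγ1.le
    (lt_of_lt_of_le (by linarith) (le_max_left _ _))] with n hn
  have hd : 0 < ‖diagEntry lam n‖ :=
    (sub_pos.mpr h).trans_le (norm_sub_half_sub_half_le_norm_diagEntry lam n)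
  rw [growthMajorant]
  gcongr
  · exact growthMajorant_nonneg lam n
  · exact (div_le_iff₀ hd).mpr hn

theorem inResolvent_of_half_lt_norm_sub_half {a : ℕ → ℝ} (hmono : Monotone a)
    (htop : Tendsto a atTop atTop) {lam : ℂ} (h : 1 / 2 < ‖lam - 1 / 2‖) : InResolvent a lam := by
  obtain ⟨B, hB, hgrowth⟩ := exists_growthMajorant_le h
  set δ := ‖lam - 1 / 2‖ - 1 / 2
  have hδ : 0 < δ := sub_pos.mpr h
  have hdδ := norm_sub_half_sub_half_le_norm_diagEntry lam
  have hd : ∀ n, diagEntry lam n ≠ 0 := fun n => norm_pos_iff.mp (hδ.trans_le (hdδ n))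
  set M := (1 + B / δ) / δ
  have hbound : ∀ k x, memLambda a x →
      ∀ n, wt a k n * ‖cesaroResolvent lam x n‖ ≤ M * pk a k x := by
    intro k x hx n
    have hE : Monotone fun n => pk a k x * Real.exp (a n / ((k : ℝ) + 1)) := by
      refine fun m n hmn => mul_le_mul_of_nonneg_left ?_ (pk_nonneg hx k)
      exact Real.exp_le_exp.mpr (by gcongr; exact hmono hmn)
    calc wt a k n * ‖cesaroResolvent lam x n‖
        ≤ wt a k n * (M * (pk a k x * Real.exp (a n / ((k : ℝ) + 1)))) :=
          mul_le_mul_of_nonneg_left (norm_cesaroResolvent_le hδ hdδ (norm_le_pk_mul_exp hx k) hE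
            hgrowth n) (Real.exp_pos _).le
      _ = M * pk a k x := by rw [mul_left_comm, mul_left_comm (wt a k n), wt_mul_exp, mul_one]
  refine ⟨cesaroResolvent lam, fun x hx => memLambda_of_bounded htop fun k => ⟨_, hbound k x hx⟩,
    fun x y _ _ => cesaroResolvent_add lam x y, fun c x _ => cesaroResolvent_smul lam c x,
    fun k => ⟨k, M, by positivity, fun x hx => ciSup_le (hbound k x hx)⟩,
    fun x _ => cesaroResolvent_sub_cesaro hd x, fun x _ => sub_cesaro_cesaroResolvent hd x⟩

lemma eventually_exp_mul_norm_diagEntry_le {lam : ℂ} (hlam : lam ≠ 0) {γ : ℝ}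
    (hγ : γ < (lam⁻¹).re) :
    ∀ᶠ n : ℕ in atTop, Real.exp (γ / ((n : ℝ) + 1)) * ‖diagEntry lam n‖ ≤ ‖lam‖ := by
  have hsmall : ∀ᶠ n : ℕ in atTop, 1 / ((n : ℝ) + 1) * ‖lam⁻¹‖ ^ 2 / 2 ≤ (lam⁻¹).re - γ := by
    have := (tendsto_one_div_add_atTop_nhds_zero_nat.mul_const (‖lam⁻¹‖ ^ 2)).div_const 2
    rw [zero_mul, zero_div] at this
    exact this.eventually (ge_mem_nhds (by linarith))
  filter_upwards [hsmall] with n hn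
  set x : ℝ := 1 / ((n : ℝ) + 1)
  have hx : 0 ≤ x := by positivity
  have h := norm_one_sub_le_exp ((x : ℂ) * lam⁻¹)
  rw [Complex.re_ofReal_mul, norm_mul, Complex.norm_real, Real.norm_of_nonneg hx] at h
  have hexp : Real.exp (γ * x) * ‖1 - (x : ℂ) * lam⁻¹‖ ≤ 1 := by
    calc Real.exp (γ * x) * ‖1 - (x : ℂ) * lam⁻¹‖
        ≤ Real.exp (γ * x) * Real.exp (-(x * (lam⁻¹).re) + (x * ‖lam⁻¹‖) ^ 2 / 2) := by gcongr
      _ ≤ Real.exp 0 := by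
          rw [← Real.exp_add, Real.exp_le_exp]
          nlinarith [mul_le_mul_of_nonneg_left hn hx]
      _ = 1 := Real.exp_zero
  rw [norm_diagEntry_eq hlam, ← mul_one_div γ, mul_left_comm]
  exact mul_le_of_le_one_right (norm_nonneg _) hexp

section InsideDisc

variable {lam : ℂ} {u : ℕ → ℂ} (hu : lam • u - cesaro u = Pi.single 0 1)
include hu

lemma diagEntry_mul_sum_range_succ (n : ℕ) (hn : 1 ≤ n) :
    diagEntry lam n * ∑ i ∈ range (n + 1), u i = lam * ∑ i ∈ range n, u i := by
  have h := (sub_cesaro_apply lam u n).symm.trans (congrFun hu n)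
  rw [Pi.single_apply, if_neg (by omega)] at h
  exact sub_eq_zero.mp h

lemma sum_range_ne_zero (hlam : lam ≠ 0) (n : ℕ) (hn : 1 ≤ n) : ∑ i ∈ range n, u i ≠ 0 := by
  induction n, hn using Nat.le_induction with
  | base =>
    intro h0
    have h := (sub_cesaro_apply lam u 0).symm.trans (congrFun hu 0)
    rw [h0] at h
    simp at h
  | succ n hn ih =>
    intro h0
    have h := diagEntry_mul_sum_range_succ hu n hn
    rw [h0, mul_zero] at h
    exact mul_ne_zero hlam ih h.symm

lemma exists_pos_mul_exp_log_le_norm_sum_range (hd : ∀ n, diagEntry lam n ≠ 0) {γ : ℝ}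
    (hγ0 : 0 ≤ γ) (hγ : γ < (lam⁻¹).re) :
    ∃ c > 0, ∀ᶠ n : ℕ in atTop,
      c * Real.exp (γ * Real.log ((n : ℝ) + 1)) ≤ ‖∑ i ∈ range n, u i‖ := by
  have hlam : lam ≠ 0 := by rintro rfl; simp at hγ; linarith
  refine exists_pos_mul_exp_mul_log_le hγ0 ((eventually_ge_atTop 1).mono fun n hn =>
    norm_pos_iff.mpr (sum_range_ne_zero hu hlam n hn)) ?_
  filter_upwards [eventually_exp_mul_norm_diagEntry_le hlam hγ, eventually_ge_atTop 1]
    with n hn hn1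
  have hdn : 0 < ‖diagEntry lam n‖ := norm_pos_iff.mpr (hd n)
  have h := congrArg norm (diagEntry_mul_sum_range_succ hu n hn1)
  rw [norm_mul, norm_mul] at h
  refine le_of_mul_le_mul_left ?_ hdn
  rw [h, ← mul_assoc, mul_comm ‖diagEntry lam n‖]
  exact mul_le_mul_of_nonneg_right hn (norm_nonneg _)

lemma exists_pos_mul_exp_log_le_norm (hd : ∀ n, diagEntry lam n ≠ 0) {γ : ℝ}
    (hγ0 : 0 ≤ γ) (hγ : γ < (lam⁻¹).re) :
    ∃ c > 0, ∀ᶠ n : ℕ in atTop, c * Real.exp ((γ - 1) * Real.log ((n : ℝ) + 1)) ≤ ‖u n‖ := by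
  obtain ⟨c, hc, hS⟩ := exists_pos_mul_exp_log_le_norm_sum_range hu hd hγ0 hγ
  refine ⟨c / (‖lam‖ + 1), by positivity, ?_⟩
  filter_upwards [hS, eventually_ge_atTop 1] with n hSn hn
  have hn0 : (0 : ℝ) < (n : ℝ) + 1 := by positivity
  have hrel : ‖diagEntry lam n‖ * ‖u n‖ * ((n : ℝ) + 1) = ‖∑ i ∈ range n, u i‖ := by
    have h : diagEntry lam n * u n * ((n : ℂ) + 1) = ∑ i ∈ range n, u i := by
      rw [← sum_range_succ_sub_sum u, mul_sub, diagEntry_mul_sum_range_succ hu n hn, diagEntry]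
      field_simp
      ring
    rw [← h, norm_mul, norm_mul, show ‖(n : ℂ) + 1‖ = (n : ℝ) + 1 by
      exact_mod_cast Complex.norm_natCast (n + 1)]
  have hsplit : Real.exp (γ * Real.log ((n : ℝ) + 1)) =
      Real.exp ((γ - 1) * Real.log ((n : ℝ) + 1)) * ((n : ℝ) + 1) := by
    rw [sub_mul, one_mul, Real.exp_sub, Real.exp_log hn0, div_mul_cancel₀ _ hn0.ne']
  rw [hsplit, ← hrel, ← mul_assoc] at hSn
  have := le_of_mul_le_mul_right hSn hn0
  rw [div_mul_eq_mul_div, div_le_iff₀ (by positivity)]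
  nlinarith [norm_diagEntry_le lam n, norm_nonneg (u n)]

end InsideDisc

lemma eventually_le_mul_log_of_mem_Sk {a : ℕ → ℝ} {s : ℝ} (hs : s ∈ Sk a 0) :
    ∀ᶠ n : ℕ in atTop, a n ≤ s * Real.log ((n : ℝ) + 1) := by
  filter_upwards [hs.tendsto_atTop_zero.eventually (gt_mem_nhds one_pos)] with n hn
  have hpos : (0 : ℝ) < (n : ℝ) + 1 := by positivity
  rw [CharP.cast_eq_zero, zero_add, div_one, div_lt_one (Real.rpow_pos_of_pos hpos s)] at hn
  rw [← Real.log_rpow hpos, ← Real.exp_le_exp, Real.exp_log (Real.rpow_pos_of_pos hpos s)]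
  exact hn.le

theorem not_inResolvent_of_norm_sub_half_lt {a : ℕ → ℝ} (hS : (Sk a 0).Nonempty) {lam : ℂ}
    (h : ‖lam - 1 / 2‖ < 1 / 2) : ¬ InResolvent a lam := by
  by_cases hrecip : ∃ m : ℕ, lam = 1 / ((m : ℂ) + 1)
  · obtain ⟨m, rfl⟩ := hrecip
    exact not_inResolvent_inv_succ a m
  rw [not_exists] at hrecip
  have hd : ∀ n, diagEntry lam n ≠ 0 := fun n => sub_ne_zero.mpr (hrecip n)
  obtain ⟨s, hs⟩ := hS
  have hlog : ∀ᶠ n : ℕ in atTop, a n ≤ max s 0 * Real.log ((n : ℝ) + 1) := by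
    filter_upwards [eventually_le_mul_log_of_mem_Sk hs] with n hn
    have hlog0 : 0 ≤ Real.log ((n : ℝ) + 1) :=
      Real.log_nonneg (by linarith [n.cast_nonneg (α := ℝ)])
    exact hn.trans (mul_le_mul_of_nonneg_right (le_max_left _ _) hlog0)
  have hβ := one_lt_re_inv_of_norm_sub_half_lt h
  -- the weight `w_k` is beaten by the polynomial growth `n ^ (Re λ⁻¹ - 1)` once `k` is large
  obtain ⟨k, hk⟩ := exists_nat_gt (max s 0 / ((lam⁻¹).re - 1))
  have hsk : max s 0 / ((k : ℝ) + 1) < (lam⁻¹).re - 1 := by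
    rw [div_lt_iff₀ (by positivity)]
    rw [div_lt_iff₀ (by linarith)] at hk
    nlinarith
  refine not_inResolvent_of_forall_ne (memLambda_single a 0) fun u hu heq => ?_
  obtain ⟨c, hc, hlow⟩ := exists_pos_mul_exp_log_le_norm heq hd
    (γ := 1 + max s 0 / ((k : ℝ) + 1)) (by positivity) (by linarith)
  have hbig : ∀ᶠ n in atTop, c ≤ wt a k n * ‖u n‖ := by
    filter_upwards [hlow, hlog] with n hn hlogn
    have hexp : 1 ≤ wt a k n * Real.exp (max s 0 / ((k : ℝ) + 1) * Real.log ((n : ℝ) + 1)) := by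
      rw [wt, ← Real.exp_add, Real.one_le_exp_iff, div_mul_eq_mul_div, ← add_div, mul_comm]
      exact div_nonneg (by linarith) (by positivity)
    rw [add_sub_cancel_left] at hn
    calc c ≤ c * (wt a k n * Real.exp (max s 0 / ((k : ℝ) + 1) * Real.log ((n : ℝ) + 1))) :=
          le_mul_of_one_le_right hc.le hexp
      _ = wt a k n * (c * Real.exp (max s 0 / ((k : ℝ) + 1) * Real.log ((n : ℝ) + 1))) := by ring
      _ ≤ wt a k n * ‖u n‖ := mul_le_mul_of_nonneg_left hn (Real.exp_pos _).le
  obtain ⟨n, hsmall, hlarge⟩ := ((hu k).eventually (gt_mem_nhds hc)).and hbig |>.exists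
  exact hsmall.not_ge hlarge

lemma closure_eq_closedBall_of_ball_subset_of_subset_closedBall {E : Type*}
    [NormedAddCommGroup E] [NormedSpace ℝ E] {s : Set E} {x : E} {r : ℝ} (hr : r ≠ 0)
    (hball : Metric.ball x r ⊆ s) (hclosed : s ⊆ Metric.closedBall x r) :
    closure s = Metric.closedBall x r :=
  (closure_minimal hclosed Metric.isClosed_closedBall).antisymm
    (closure_ball x hr ▸ closure_mono hball)

theorem stmt14_general (a : ℕ → ℝ) (hmono : StrictMono a)
    (htop : Tendsto a atTop atTop) (hS : (Sk a 0).Nonempty) :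
    (∀ lam : ℂ, ‖lam - 1 / 2‖ < 1 / 2 → ¬ InResolvent a lam) ∧
    (∀ m : ℕ, ¬ InResolvent a (1 / ((m : ℂ) + 1))) ∧
    (∀ lam : ℂ, ¬ InResolvent a lam → ‖lam - 1 / 2‖ ≤ 1 / 2) ∧
    closure {lam : ℂ | ¬ InResolvent a lam} = {lam : ℂ | ‖lam - 1 / 2‖ ≤ 1 / 2} := by
  have hdisc : ∀ lam : ℂ, ‖lam - 1 / 2‖ < 1 / 2 → ¬ InResolvent a lam :=
    fun _ => not_inResolvent_of_norm_sub_half_lt hS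
  have hsub : ∀ lam : ℂ, ¬ InResolvent a lam → ‖lam - 1 / 2‖ ≤ 1 / 2 := fun _ hlam =>
    not_lt.mp fun h => hlam (inResolvent_of_half_lt_norm_sub_half hmono.monotone htop h)
  refine ⟨hdisc, not_inResolvent_inv_succ a, hsub, ?_⟩
  have hball : Metric.closedBall (1 / 2 : ℂ) (1 / 2) = {lam : ℂ | ‖lam - 1 / 2‖ ≤ 1 / 2} := by
    ext; simp [dist_eq_norm]
  rw [← hball]
  exact closure_eq_closedBall_of_ball_subset_of_subset_closedBall (by norm_num)
    (fun lam hl => hdisc lam (by simpa [dist_eq_norm] using hl))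
    (fun lam hl => by simpa [dist_eq_norm] using hsub lam hl)

/-- if `S_1(α) ≠ ∅` then
`{|λ - 1/2| < 1/2} ∪ {1/m : m ≥ 1} ⊆ σ(C; Λ₀(α)) ⊆ {|λ - 1/2| ≤ 1/2}`; in
particular the closure of `σ(C; Λ₀(α))` is the closed disc `{|λ - 1/2| ≤ 1/2}`. -/
theorem stmt14 (a : ℕ → ℝ) (hmono : StrictMono a) (h1 : ∀ n, 1 < a n)
    (htop : Tendsto a atTop atTop) (hS : (Sk a 0).Nonempty) :
    (∀ lam : ℂ, ‖lam - 1 / 2‖ < 1 / 2 → ¬ InResolvent a lam) ∧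
    (∀ m : ℕ, ¬ InResolvent a (1 / ((m : ℂ) + 1))) ∧
    (∀ lam : ℂ, ¬ InResolvent a lam → ‖lam - 1 / 2‖ ≤ 1 / 2) ∧
    closure {lam : ℂ | ¬ InResolvent a lam} = {lam : ℂ | ‖lam - 1 / 2‖ ≤ 1 / 2} :=
  stmt14_general a hmono htop hS
end
end

section
/- Let α be strictly increasing with α_n > 1 and α_n → ∞. The iterates C^m of the Cesàro operator converge in L_b(Λ₀(α)) as m → ∞ to the projection P given by Px := x_1·𝟙 (where 𝟙 = (1,1,1,…)); in particular, for every bounded subset B of Λ₀(α) and every k ≥ 1, sup_{x∈B} p_k(C^m x − x_1·𝟙) → 0 as m → ∞. -/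
open Filter Finset Topology

noncomputable section

lemma wt_pos (a : ℕ → ℝ) (k n : ℕ) : 0 < wt a k n := Real.exp_pos _

lemma wt_anti (a : ℕ → ℝ) (hmono : Monotone a) (k : ℕ) {i n : ℕ} (h : i ≤ n) :
    wt a k n ≤ wt a k i := by
  unfold wt
  apply Real.exp_le_exp.2
  have hk : (0:ℝ) < (k:ℝ) + 1 := by positivity
  rw [div_le_div_iff_of_pos_right hk]
  have := hmono h
  linarith

lemma frac_mono {s t : ℕ} (h : s ≤ t) : (s:ℝ)/((s:ℝ)+1) ≤ (t:ℝ)/((t:ℝ)+1) := by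
  have hs : (0:ℝ) < (s:ℝ)+1 := by positivity
  have ht : (0:ℝ) < (t:ℝ)+1 := by positivity
  rw [div_le_div_iff₀ hs ht]
  have : (s:ℝ) ≤ t := by exact_mod_cast h
  nlinarith

lemma iterate_zero_coord (y : ℕ → ℂ) (m : ℕ) : (cesaro^[m] y) 0 = y 0 := by
  induction m with
  | zero => rfl
  | succ m ih =>
    rw [Function.iterate_succ_apply']
    simp [cesaro, ih]

lemma cesaro_sub_const (u : ℕ → ℂ) (cst : ℂ) :
    cesaro (u - cst • (fun _ => (1:ℂ))) = cesaro u - cst • (fun _ => (1:ℂ)) := by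
  funext n
  have hne : ((n:ℂ)+1) ≠ 0 := by
    exact Nat.cast_add_one_ne_zero n
  simp only [cesaro, Pi.sub_apply, Pi.smul_apply, smul_eq_mul, mul_one]
  rw [Finset.sum_sub_distrib, Finset.sum_const, card_range, nsmul_eq_mul, sub_div]
  congr 1
  push_cast
  rw [mul_comm, mul_div_assoc, div_self hne, mul_one]

lemma iter_sub (x : ℕ → ℂ) (cst : ℂ) (m : ℕ) :
    cesaro^[m] x - cst • (fun _ => (1:ℂ)) = cesaro^[m] (x - cst • (fun _ => (1:ℂ))) := by
  induction m with
  | zero => simp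
  | succ m ih =>
    rw [Function.iterate_succ_apply', Function.iterate_succ_apply', ← ih, cesaro_sub_const]

lemma master (a : ℕ → ℝ) (hmono : Monotone a) (k : ℕ) (y : ℕ → ℂ) (hy0 : y 0 = 0)
    (P : ℝ) (hP : ∀ n, wt a k n * ‖y n‖ ≤ P) :
    ∀ m n, wt a k n * ‖(cesaro^[m] y) n‖ ≤ ((n:ℝ)/((n:ℝ)+1))^m * P := by
  have hP0 : 0 ≤ P :=
    le_trans (mul_nonneg (wt_pos a k 0).le (norm_nonneg _)) (hP 0)
  intro m
  induction m with
  | zero => intro n; simpa using hP n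
  | succ m ih =>
    intro n
    rw [Function.iterate_succ_apply']
    set z := cesaro^[m] y with hz
    have hz0 : ‖z 0‖ = 0 := by
      rw [hz, iterate_zero_coord, hy0, norm_zero]
    have hden : (0:ℝ) < (n:ℝ) + 1 := by positivity
    have habs : ‖cesaro z n‖
        ≤ (∑ i ∈ range (n+1), ‖z i‖) / ((n:ℝ)+1) := by
      simp only [cesaro]
      rw [norm_div]
      have hcast : ‖(n:ℂ)+1‖ = (n:ℝ)+1 := by
        have h1 : ((n:ℂ)+1) = ((n+1 : ℕ) : ℂ) := by push_cast; ring
        rw [h1, Complex.norm_natCast]; push_cast; ring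
      rw [hcast]
      gcongr
      exact norm_sum_le _ _
    have hsum : ∑ i ∈ range (n+1), wt a k n * ‖z i‖
        ≤ (n:ℝ) * (((n:ℝ)/((n:ℝ)+1))^m * P) := by
      rw [Finset.sum_range_succ']
      have h0 : wt a k n * ‖z 0‖ = 0 := by rw [hz0, mul_zero]
      rw [h0, add_zero]
      calc ∑ i ∈ range n, wt a k n * ‖z (i+1)‖
          ≤ ∑ _i ∈ range n, ((n:ℝ)/((n:ℝ)+1))^m * P := by
            apply Finset.sum_le_sum
            intro i hi
            have hi' : i + 1 ≤ n := Finset.mem_range.1 hi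
            calc wt a k n * ‖z (i+1)‖
                ≤ wt a k (i+1) * ‖z (i+1)‖ :=
                  mul_le_mul_of_nonneg_right (wt_anti a hmono k hi') (norm_nonneg _)
              _ ≤ (((i+1:ℕ):ℝ)/(((i+1:ℕ):ℝ)+1))^m * P := ih (i+1)
              _ ≤ ((n:ℝ)/((n:ℝ)+1))^m * P := by
                  have hq := frac_mono (s := i+1) (t := n) hi'
                  have hpow : (((i+1:ℕ):ℝ)/(((i+1:ℕ):ℝ)+1))^m ≤ ((n:ℝ)/((n:ℝ)+1))^m :=
                    pow_le_pow_left₀ (by positivity) hq m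
                  exact mul_le_mul_of_nonneg_right hpow hP0
        _ = (n:ℝ) * (((n:ℝ)/((n:ℝ)+1))^m * P) := by
            rw [Finset.sum_const, card_range, nsmul_eq_mul]
    calc wt a k n * ‖cesaro z n‖
        ≤ wt a k n * ((∑ i ∈ range (n+1), ‖z i‖) / ((n:ℝ)+1)) :=
          mul_le_mul_of_nonneg_left habs (wt_pos a k n).le
      _ = (∑ i ∈ range (n+1), wt a k n * ‖z i‖) / ((n:ℝ)+1) := by
          rw [← Finset.mul_sum, mul_div_assoc]
      _ ≤ ((n:ℝ) * (((n:ℝ)/((n:ℝ)+1))^m * P)) / ((n:ℝ)+1) := by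
          gcongr
      _ = ((n:ℝ)/((n:ℝ)+1))^(m+1) * P := by
          rw [pow_succ]
          field_simp

lemma ybound (a : ℕ → ℝ) (hmono : Monotone a) (j : ℕ) (x : ℕ → ℂ) (hx : memLambda a x)
    (M : ℝ) (hMx : pk a j x ≤ M) :
    ∀ n, wt a j n * ‖x n - x 0‖ ≤ 2 * M := by
  intro n
  have hbdd : BddAbove (Set.range fun n => wt a j n * ‖x n‖) :=
    (hx j).bddAbove_range
  have hterm : ∀ i, wt a j i * ‖x i‖ ≤ M :=
    fun i => le_trans (le_ciSup hbdd i) hMx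
  have htri : ‖x n - x 0‖ ≤ ‖x n‖ + ‖x 0‖ := by
    have := norm_sub_le (x n) (x 0)
    simpa using this
  calc wt a j n * ‖x n - x 0‖
      ≤ wt a j n * (‖x n‖ + ‖x 0‖) :=
        mul_le_mul_of_nonneg_left htri (wt_pos a j n).le
    _ = wt a j n * ‖x n‖ + wt a j n * ‖x 0‖ := mul_add _ _ _
    _ ≤ M + wt a j 0 * ‖x 0‖ :=
        add_le_add (hterm n)
          (mul_le_mul_of_nonneg_right (wt_anti a hmono j (Nat.zero_le n)) (norm_nonneg _))
    _ ≤ M + M := add_le_add_right (hterm 0) M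
    _ = 2 * M := by ring

/-- the iterates `C^m` converge, uniformly on bounded subsets of
`Λ₀(α)`, to the projection `P x = x_1 𝟙`. -/
theorem stmt17 (a : ℕ → ℝ) (hmono : StrictMono a) (h1 : ∀ n, 1 < a n)
    (htop : Tendsto a atTop atTop) :
    ∀ B : Set (ℕ → ℂ), (∀ x ∈ B, memLambda a x) →
      (∀ k : ℕ, ∃ M : ℝ, ∀ x ∈ B, pk a k x ≤ M) →
      ∀ k : ℕ, ∀ ε : ℝ, 0 < ε → ∃ N : ℕ, ∀ m ≥ N, ∀ x ∈ B,
        pk a k (cesaro^[m] x - x 0 • fun _ => (1 : ℂ)) ≤ ε := by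
  intro B hmem hbdd k ε hε
  obtain ⟨M, hM⟩ := hbdd k
  obtain ⟨M', hM'⟩ := hbdd (k+1)
  set P : ℝ := 2 * max M 0 with hPdef
  set P' : ℝ := 2 * max M' 0 with hP'def
  have hP0 : 0 ≤ P := by positivity
  have hP'0 : 0 ≤ P' := by positivity
  have hmonoa : Monotone a := hmono.monotone
  set c : ℝ := 1/((k:ℝ)+1) - 1/((k:ℝ)+2) with hcdef
  have hcpos : 0 < c := by
    rw [hcdef, sub_pos]
    apply one_div_lt_one_div_of_lt
    · positivity
    · linarith
  -- tail estimate: eventually exp(-a n * c) * P' < ε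
  have h1t : Tendsto (fun n => -(a n) * c) atTop atBot := by
    apply Tendsto.atBot_mul_const hcpos
    exact tendsto_neg_atBot_iff.mpr htop
  have h2t : Tendsto (fun n => Real.exp (-(a n) * c) * P') atTop (𝓝 0) := by
    have := (Real.tendsto_exp_atBot.comp h1t).mul_const P'
    simpa using this
  obtain ⟨N0, hN0⟩ := eventually_atTop.1 (h2t.eventually_lt_const hε)
  -- head estimate
  set q : ℝ := (N0:ℝ)/((N0:ℝ)+1) with hqdef
  have hq0 : 0 ≤ q := by positivity
  have hq1 : q < 1 := by
    rw [hqdef, div_lt_one (by positivity)]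
    linarith
  have h3t : Tendsto (fun m => q^m * P) atTop (𝓝 0) := by
    have := (tendsto_pow_atTop_nhds_zero_of_lt_one hq0 hq1).mul_const P
    simpa using this
  obtain ⟨N1, hN1⟩ := eventually_atTop.1 (h3t.eventually_lt_const hε)
  refine ⟨N1, fun m hm x hx => ?_⟩
  set y : ℕ → ℂ := x - x 0 • (fun _ => (1:ℂ)) with hydef
  have hrw : cesaro^[m] x - x 0 • (fun _ => (1:ℂ)) = cesaro^[m] y := iter_sub x (x 0) m
  have hyn : ∀ n, y n = x n - x 0 := by
    intro n; simp [hydef]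
  have hy0 : y 0 = 0 := by rw [hyn 0, sub_self]
  have hyk : ∀ n, wt a k n * ‖y n‖ ≤ P := by
    intro n
    rw [hyn]
    refine le_trans (ybound a hmonoa k x (hmem x hx) M (hM x hx) n) ?_
    rw [hPdef]
    have : M ≤ max M 0 := le_max_left _ _
    linarith
  have hyk' : ∀ n, wt a (k+1) n * ‖y n‖ ≤ P' := by
    intro n
    rw [hyn]
    refine le_trans (ybound a hmonoa (k+1) x (hmem x hx) M' (hM' x hx) n) ?_
    rw [hP'def]
    have : M' ≤ max M' 0 := le_max_left _ _
    linarith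
  rw [hrw]
  apply Real.iSup_le _ hε.le
  intro n
  by_cases hn : n ≤ N0
  · calc wt a k n * ‖(cesaro^[m] y) n‖
        ≤ ((n:ℝ)/((n:ℝ)+1))^m * P := master a hmonoa k y hy0 P hyk m n
      _ ≤ q^m * P := by
          have hpow : ((n:ℝ)/((n:ℝ)+1))^m ≤ q^m :=
            pow_le_pow_left₀ (by positivity) (frac_mono hn) m
          exact mul_le_mul_of_nonneg_right hpow hP0
      _ ≤ ε := (hN1 m hm).le
  · push_neg at hn
    have key := master a hmonoa (k+1) y hy0 P' hyk' m n
    have hpow1 : ((n:ℝ)/((n:ℝ)+1))^m ≤ 1 := by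
      apply pow_le_one₀ (by positivity)
      rw [div_le_one (by positivity)]
      linarith
    have h5 : wt a (k+1) n * ‖(cesaro^[m] y) n‖ ≤ P' := by
      refine le_trans key ?_
      calc ((n:ℝ)/((n:ℝ)+1))^m * P' ≤ 1 * P' := mul_le_mul_of_nonneg_right hpow1 hP'0
        _ = P' := one_mul _
    have hwt : wt a k n = Real.exp (-(a n) * c) * wt a (k+1) n := by
      rw [wt, wt, ← Real.exp_add]
      congr 1
      rw [hcdef]
      push_cast
      field_simp
      ring
    calc wt a k n * ‖(cesaro^[m] y) n‖
        = Real.exp (-(a n) * c) * (wt a (k+1) n * ‖(cesaro^[m] y) n‖) := by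
          rw [hwt]; ring
      _ ≤ Real.exp (-(a n) * c) * P' :=
          mul_le_mul_of_nonneg_left h5 (Real.exp_pos _).le
      _ ≤ ε := (hN0 n (le_of_lt hn)).le
end
end
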